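/- For any strongly convex rational polyhedral cone σ ⊂ ℝ^n, the twisted semigroup algebra ℂ_θ[σ] (the subalgebra of the quantum Laurent algebra ℂ_θ(t₁,…,t_n) spanned by characters χ_m, m ∈ σ^∨ ∩ ℤ^n) is a noetherian domain. -/

import Mathlib

/-!
Characters multiply as `χ_p ⋆ χ_q = c(p, q) χ_(p+q)` with `c(p, q) ≠ 0`. So supports add,
which gives closure, and for any monomial order compatible with addition the leading term of a
product is the product of the leading terms, which excludes zero divisors.

For noetherianity write `A p = (⟨p, v_k⟩)_k`, so that `σ^∨ ∩ ℤⁿ = {p | 0 ≤ A p}` with units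
`ker A`. Since `ker A` is a direct summand there is `φ : ℤⁿ → ℤ^m` restricting to an isomorphism
`ker A ≅ ℤ^m`; order monomials lexicographically by `ψ = (A, φ)`. On the region `ψ ≥ 0` this order
is well-founded and divisibility is Dickson's order on `ℕ^(s+m)`, so elements of an ideal `I` with
minimal leading exponents form a finite Gröbner basis, and the division algorithm writes every
element of `I` supported in the region in terms of it. A unit `χ_w`, `w ∈ ker A`, moves any
element of `ℂ_θ[σ]` into the region.
-/

noncomputable section

/-- The twisting cocycle `exp((i/2) p·θ·q)`. -/
def thetaCocycle {n : ℕ} (θ : Matrix (Fin n) (Fin n) ℂ) (p q : Fin n → ℤ) : ℂ :=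
  Complex.exp ((Complex.I / 2) * ∑ i, ∑ j, (p i : ℂ) * θ i j * (q j : ℂ))

/-- The star product `⋆_θ` of the quantum Laurent algebra `ℂ_θ(t₁,…,t_n)`,
realized on the group algebra `ℂ[ℤⁿ]`. -/
def starProd {n : ℕ} (θ : Matrix (Fin n) (Fin n) ℂ)
    (f g : (Fin n → ℤ) →₀ ℂ) : (Fin n → ℤ) →₀ ℂ :=
  f.sum fun p a => g.sum fun q b => Finsupp.single (p + q) (a * b * thetaCocycle θ p q)

/-- The twisted semigroup algebra `ℂ_θ[σ]`: the ℂ-span of the characters `χ_m`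
for `m ∈ σ^∨ ∩ ℤⁿ`, inside the quantum Laurent algebra. -/
def coneAlg {n : ℕ} (σ : Set (Fin n → ℝ)) : Submodule ℂ ((Fin n → ℤ) →₀ ℂ) :=
  Submodule.span ℂ
    {x | ∃ p : Fin n → ℤ, (∀ u ∈ σ, 0 ≤ ∑ i, (p i : ℝ) * u i) ∧ x = Finsupp.single p (1 : ℂ)}

open Finsupp Pointwise

theorem Set.IsPWO.exists_finset_forall_exists_le {α : Type*} [PartialOrder α] {D : Set α}
    (hD : D.IsPWO) : ∃ D₀ : Finset α, ↑D₀ ⊆ D ∧ ∀ d ∈ D, ∃ e ∈ D₀, e ≤ d := by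
  have hfin : {x | Minimal (· ∈ D) x}.Finite :=
    (setOfPred_minimal_antichain _).finite_of_partiallyWellOrderedOn
      (hD.mono fun _ hx => hx.prop)
  refine ⟨hfin.toFinset, fun x hx => (hfin.mem_toFinset.mp hx).prop, fun d hd => ?_⟩
  obtain ⟨e, hle, he⟩ := hD.exists_le_minimal hd
  exact ⟨e, hfin.mem_toFinset.mpr he, hle⟩

theorem Set.IsPWO.wellFoundedOn_toLex {ι : Type*} {β : ι → Type*} [LinearOrder ι]
    [WellFoundedLT ι] [∀ i, PartialOrder (β i)] {s : Set (∀ i, β i)} (hs : s.IsPWO) :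
    s.WellFoundedOn fun x y => toLex x < toLex y := by
  have hlex : s.PartiallyWellOrderedOn fun x y => toLex x ≤ toLex y :=
    partiallyWellOrderedOn_iff_exists_lt.mpr fun f hf => (hs.exists_lt hf).imp
      fun _ => Exists.imp fun _ h => ⟨h.1, Pi.toLex_monotone h.2⟩
  exact hlex.wellFoundedOn.mono' fun _ _ _ _ h => lt_iff_le_not_ge.mp h

theorem isPWO_Ici_zero (ι : Type*) [Finite ι] : (Set.Ici (0 : ι → ℤ)).IsPWO := by
  rw [← Set.pi_univ_Ici]
  exact Set.IsPWO.pi fun _ => (BddBelow.isWF bddBelow_Ici).isPWO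

def AddMonoidHom.append {M : Type*} [AddCommGroup M] {s m : ℕ} (A : M →+ (Fin s → ℤ))
    (φ : M →+ (Fin m → ℤ)) : M →+ (Fin (s + m) → ℤ) where
  toFun p := Fin.append (A p) (φ p)
  map_zero' := by
    ext i
    refine Fin.addCases (fun k => ?_) (fun t => ?_) i <;> simp
  map_add' p q := by
    ext i
    refine Fin.addCases (fun k => ?_) (fun t => ?_) i <;> simp

theorem AddMonoidHom.nonneg_append_iff {M : Type*} [AddCommGroup M] {s m : ℕ}
    (A : M →+ (Fin s → ℤ)) (φ : M →+ (Fin m → ℤ)) (p : M) :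
    0 ≤ A.append φ p ↔ 0 ≤ A p ∧ 0 ≤ φ p := by
  simp [Pi.le_def, Fin.forall_fin_add, AddMonoidHom.append]

theorem AddMonoidHom.append_eq_zero_iff {M : Type*} [AddCommGroup M] {s m : ℕ}
    (A : M →+ (Fin s → ℤ)) (φ : M →+ (Fin m → ℤ)) (p : M) :
    A.append φ p = 0 ↔ A p = 0 ∧ φ p = 0 := by
  simp [funext_iff, Fin.forall_fin_add, AddMonoidHom.append]

/-- The kernel of a map of lattices is a direct summand: the image is free, so the map splits. -/
theorem LinearMap.exists_bijective_domRestrict_ker {ι κ : Type*} [Fintype ι] [Finite κ]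
    (A : (ι → ℤ) →ₗ[ℤ] (κ → ℤ)) :
    ∃ (m : ℕ) (φ : (ι → ℤ) →ₗ[ℤ] (Fin m → ℤ)), Function.Bijective (φ.domRestrict (ker A)) := by
  obtain ⟨g, hg⟩ :=
    Module.projective_lifting_property A.rangeRestrict LinearMap.id A.surjective_rangeRestrict
  have hA : ∀ p, A (g (A.rangeRestrict p)) = A p := fun p =>
    congrArg Subtype.val (LinearMap.congr_fun hg (A.rangeRestrict p))
  let ρ : (ι → ℤ) →ₗ[ℤ] ker A :=
    (LinearMap.id - g ∘ₗ A.rangeRestrict).codRestrict _ fun p => by simp [hA]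
  let β := Module.finBasis ℤ (ker A)
  refine ⟨_, β.equivFun.toLinearMap ∘ₗ ρ, ?_⟩
  convert β.equivFun.bijective using 1
  ext ⟨p, hp⟩ : 1
  have : A.rangeRestrict p = 0 := Subtype.ext (mem_ker.mp hp)
  simp only [LinearEquiv.coe_toLinearMap, LinearMap.domRestrict_apply, LinearMap.coe_comp,
    Function.comp_apply]
  congr 1
  exact Subtype.ext (by simp [ρ, this])

section StarProd

variable {n : ℕ} (θ : Matrix (Fin n) (Fin n) ℂ)

theorem thetaCocycle_ne_zero (p q : Fin n → ℤ) : thetaCocycle θ p q ≠ 0 :=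
  Complex.exp_ne_zero _

theorem thetaCocycle_mul_thetaCocycle_neg (w q : Fin n → ℤ) :
    thetaCocycle θ w q * thetaCocycle θ (-w) (w + q) = thetaCocycle θ (-w) w := by
  simp only [thetaCocycle, ← Complex.exp_add, Pi.neg_apply, Pi.add_apply, Int.cast_neg,
    Int.cast_add, mul_add, Finset.sum_add_distrib, neg_mul, Finset.sum_neg_distrib]
  ring_nf

theorem starProd_apply (f g : (Fin n → ℤ) →₀ ℂ) (x : Fin n → ℤ) :
    starProd θ f g x = ∑ p ∈ f.support, ∑ q ∈ g.support,
      if p + q = x then f p * g q * thetaCocycle θ p q else 0 := by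
  classical
  simp only [starProd, Finsupp.sum, Finset.sum_apply', Finsupp.single_apply]

theorem support_starProd_subset (f g : (Fin n → ℤ) →₀ ℂ) :
    (starProd θ f g).support ⊆ f.support + g.support := by
  classical
  intro x hx
  rw [Finsupp.mem_support_iff, starProd_apply] at hx
  obtain ⟨p, hp, hpx⟩ := Finset.exists_ne_zero_of_sum_ne_zero hx
  obtain ⟨q, hq, hqx⟩ := Finset.exists_ne_zero_of_sum_ne_zero hpx
  exact Finset.mem_add.mpr ⟨p, hp, q, hq, of_not_not fun h => hqx (if_neg h)⟩

theorem starProd_mem_supported (S : AddSubmonoid (Fin n → ℤ)) {f g : (Fin n → ℤ) →₀ ℂ}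
    (hf : f ∈ supported ℂ ℂ (S : Set (Fin n → ℤ))) (hg : g ∈ supported ℂ ℂ (S : Set (Fin n → ℤ))) :
    starProd θ f g ∈ supported ℂ ℂ (S : Set (Fin n → ℤ)) := by
  rw [mem_supported] at *
  refine (Finset.coe_subset.mpr (support_starProd_subset θ f g)).trans ?_
  rw [Finset.coe_add]
  exact AddSubmonoid.add_subset hf hg

theorem starProd_single_left (w : Fin n → ℤ) (a : ℂ) (g : (Fin n → ℤ) →₀ ℂ) :
    starProd θ (single w a) g =
      g.sum fun q b => single (w + q) (a * b * thetaCocycle θ w q) :=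
  sum_single_index (by simp [Finsupp.sum])

theorem starProd_single_neg_starProd_single (w : Fin n → ℤ) (g : (Fin n → ℤ) →₀ ℂ) :
    starProd θ (single (-w) 1) (starProd θ (single w 1) g) = thetaCocycle θ (-w) w • g := by
  rw [starProd_single_left, starProd_single_left, sum_sum_index (by simp)
    (fun _ _ _ => by rw [← single_add, mul_add, add_mul])]
  conv_rhs => rw [← sum_single g, Finsupp.smul_sum]
  refine Finsupp.sum_congr fun q _ => ?_
  rw [sum_single_index (by simp), neg_add_cancel_left, smul_single, smul_eq_mul,
    ← thetaCocycle_mul_thetaCocycle_neg θ w q]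
  ring_nf

end StarProd

section LeadingExponent

variable {n K : ℕ} (ψ : (Fin n → ℤ) →+ (Fin K → ℤ))

def IsLeadExp (f : (Fin n → ℤ) →₀ ℂ) (e : Fin n → ℤ) : Prop :=
  e ∈ f.support ∧ ∀ p ∈ f.support, p ≠ e → toLex (ψ p) < toLex (ψ e)

theorem isLeadExp_single (s : Fin n → ℤ) {a : ℂ} (ha : a ≠ 0) : IsLeadExp ψ (single s a) s := by
  classical
  exact ⟨by simp [ha],
    fun p hp hps => (hps (Finset.mem_singleton.mp (support_single_subset hp))).elim⟩

variable {ψ}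

theorem exists_isLeadExp (hψ : Function.Injective ψ) {f : (Fin n → ℤ) →₀ ℂ} (hf : f ≠ 0) :
    ∃ e, IsLeadExp ψ f e := by
  obtain ⟨e, he, hmax⟩ :=
    f.support.exists_max_image (fun p => toLex (ψ p)) (support_nonempty_iff.mpr hf)
  exact ⟨e, he, fun p hp hpe => (hmax p hp).lt_of_ne fun h => hpe (hψ (toLex.injective h))⟩

theorem IsLeadExp.toLex_le {f : (Fin n → ℤ) →₀ ℂ} {e : Fin n → ℤ} (hf : IsLeadExp ψ f e)
    {p : Fin n → ℤ} (hp : p ∈ f.support) : toLex (ψ p) ≤ toLex (ψ e) :=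
  (eq_or_ne p e).elim (fun h => h ▸ le_rfl) fun h => (hf.2 p hp h).le

theorem IsLeadExp.toLex_add_lt_add {f : (Fin n → ℤ) →₀ ℂ} {e : Fin n → ℤ} (hf : IsLeadExp ψ f e)
    {g : (Fin n → ℤ) →₀ ℂ} {e' : Fin n → ℤ} (hg : IsLeadExp ψ g e') {p q : Fin n → ℤ}
    (hp : p ∈ f.support) (hq : q ∈ g.support) (hne : p ≠ e ∨ q ≠ e') :
    toLex (ψ (p + q)) < toLex (ψ (e + e')) := by
  simp only [map_add, toLex_add]
  rcases hne with hpe | hqe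
  · exact add_lt_add_of_lt_of_le (hf.2 p hp hpe) (hg.toLex_le hq)
  · exact add_lt_add_of_le_of_lt (hf.toLex_le hp) (hg.2 q hq hqe)

variable (θ : Matrix (Fin n) (Fin n) ℂ)

theorem IsLeadExp.starProd_apply_add {f g : (Fin n → ℤ) →₀ ℂ} {e e' : Fin n → ℤ}
    (hf : IsLeadExp ψ f e) (hg : IsLeadExp ψ g e') :
    starProd θ f g (e + e') = f e * g e' * thetaCocycle θ e e' := by
  rw [starProd_apply, Finset.sum_eq_single e, Finset.sum_eq_single e', if_pos rfl]
  · exact fun q hq hqe => if_neg fun h => hqe (add_left_cancel h)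
  · exact fun h => absurd hg.1 h
  · refine fun p hp hpe => Finset.sum_eq_zero fun q hq => if_neg fun h => ?_
    exact (hf.toLex_add_lt_add hg hp hq (.inl hpe)).ne (by rw [h])
  · exact fun h => absurd hf.1 h

theorem IsLeadExp.starProd {f g : (Fin n → ℤ) →₀ ℂ} {e e' : Fin n → ℤ}
    (hf : IsLeadExp ψ f e) (hg : IsLeadExp ψ g e') : IsLeadExp ψ (starProd θ f g) (e + e') := by
  refine ⟨?_, fun x hx hxe => ?_⟩
  · rw [mem_support_iff, hf.starProd_apply_add θ hg]
    exact mul_ne_zero (mul_ne_zero (mem_support_iff.mp hf.1) (mem_support_iff.mp hg.1))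
      (thetaCocycle_ne_zero θ e e')
  · obtain ⟨p, hp, q, hq, rfl⟩ := Finset.mem_add.mp (support_starProd_subset θ f g hx)
    refine hf.toLex_add_lt_add hg hp hq (not_and_or.mp ?_)
    rintro ⟨rfl, rfl⟩
    exact hxe rfl

theorem starProd_eq_zero_iff {f g : (Fin n → ℤ) →₀ ℂ} :
    starProd θ f g = 0 ↔ f = 0 ∨ g = 0 := by
  refine ⟨fun h => ?_, by rintro (rfl | rfl) <;> simp [starProd]⟩
  by_contra! hfg
  have hid : Function.Injective (AddMonoidHom.id (Fin n → ℤ)) := Function.injective_id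
  obtain ⟨e, he⟩ := exists_isLeadExp hid hfg.1
  obtain ⟨e', he'⟩ := exists_isLeadExp hid hfg.2
  simpa [h] using (he.starProd θ he').1

theorem IsLeadExp.toLex_lt_of_mem_support_sub {g X : (Fin n → ℤ) →₀ ℂ} {e : Fin n → ℤ}
    (hg : IsLeadExp ψ g e) (hX : IsLeadExp ψ X e) :
    ∀ p ∈ (g - (g e / X e) • X).support, toLex (ψ p) < toLex (ψ e) := by
  classical
  intro p hp
  have hpe : p ≠ e := by
    rintro rfl
    refine mem_support_iff.mp hp ?_
    simp [div_mul_cancel₀ _ (mem_support_iff.mp hX.1)]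
  rcases Finset.mem_union.mp (support_sub hp) with hpg | hpX
  · exact hg.2 p hpg hpe
  · exact hX.2 p (support_smul hpX) hpe

end LeadingExponent

section Noetherian

variable {n K : ℕ} (θ : Matrix (Fin n) (Fin n) ℂ) (ψ : (Fin n → ℤ) →+ (Fin K → ℤ))

def posRegion : AddSubmonoid (Fin n → ℤ) := (AddSubmonoid.nonneg (Fin K → ℤ)).comap ψ

theorem mem_posRegion {p : Fin n → ℤ} : p ∈ posRegion ψ ↔ 0 ≤ ψ p := Iff.rfl

theorem wellFoundedOn_posRegion :
    (posRegion ψ : Set (Fin n → ℤ)).WellFoundedOn fun p q => toLex (ψ p) < toLex (ψ q) :=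
  Set.wellFoundedOn_image.mp
    ((isPWO_Ici_zero (Fin K)).mono (Set.image_preimage_subset _ _)).wellFoundedOn_toLex

def IsGroebnerBasis (I : Submodule ℂ ((Fin n → ℤ) →₀ ℂ)) (T : Finset ((Fin n → ℤ) →₀ ℂ)) :
    Prop :=
  ↑T ⊆ (I : Set ((Fin n → ℤ) →₀ ℂ)) ∧
    ∀ g ∈ I, g ∈ supported ℂ ℂ (posRegion ψ : Set (Fin n → ℤ)) → ∀ e, IsLeadExp ψ g e →
      ∃ h ∈ T, h ∈ supported ℂ ℂ (posRegion ψ : Set (Fin n → ℤ)) ∧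
        ∃ e₀, IsLeadExp ψ h e₀ ∧ ψ e₀ ≤ ψ e

theorem exists_isGroebnerBasis (I : Submodule ℂ ((Fin n → ℤ) →₀ ℂ)) :
    ∃ T, IsGroebnerBasis ψ I T := by
  classical
  set D : Set (Fin K → ℤ) := {x | ∃ g ∈ I, g ∈ supported ℂ ℂ (posRegion ψ : Set (Fin n → ℤ)) ∧
    ∃ e, IsLeadExp ψ g e ∧ ψ e = x}
  have hD : D.IsPWO := (isPWO_Ici_zero (Fin K)).mono fun _ ⟨g, _, hg, e, he, hψe⟩ =>
    hψe ▸ (mem_supported ℂ g).mp hg he.1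
  obtain ⟨D₀, hD₀, hcover⟩ := hD.exists_finset_forall_exists_le
  choose g hgI hgP e he hψe using fun d : D₀ => hD₀ d.2
  refine ⟨Finset.univ.image g, ?_, fun f hfI hfP e' he' => ?_⟩
  · rw [Finset.coe_image, Finset.coe_univ, Set.image_univ]
    exact Set.range_subset_iff.mpr hgI
  · obtain ⟨d, hd, hle⟩ := hcover _ ⟨f, hfI, hfP, e', he', rfl⟩
    exact ⟨g ⟨d, hd⟩, Finset.mem_image_of_mem _ (Finset.mem_univ _), hgP _, e _, he _,
      (hψe _).symm ▸ hle⟩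

variable {ψ} {S : Set (Fin n → ℤ)} {I J : Submodule ℂ ((Fin n → ℤ) →₀ ℂ)}

theorem IsGroebnerBasis.mem_of_mem_supported (hψ : Function.Injective ψ)
    (hPS : ↑(posRegion ψ) ⊆ S) {T : Finset ((Fin n → ℤ) →₀ ℂ)} (hT : IsGroebnerBasis ψ I T)
    (hI : ∀ s ∈ S, ∀ x ∈ I, starProd θ (single s 1) x ∈ I)
    (hJ : ∀ s ∈ S, ∀ x ∈ J, starProd θ (single s 1) x ∈ J) (hTJ : (T : Set ((Fin n → ℤ) →₀ ℂ)) ⊆ J)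
    {g : (Fin n → ℤ) →₀ ℂ} (hgI : g ∈ I)
    (hgP : g ∈ supported ℂ ℂ (posRegion ψ : Set (Fin n → ℤ))) : g ∈ J := by
  obtain rfl | hg := eq_or_ne g 0
  · exact J.zero_mem
  obtain ⟨e, he⟩ := exists_isLeadExp hψ hg
  induction e using (Set.wellFoundedOn_iff.mp (wellFoundedOn_posRegion ψ)).induction
    generalizing g with
  | _ e IH =>
  have heP : e ∈ posRegion ψ := (mem_supported ℂ g).mp hgP he.1
  obtain ⟨h, hhT, hhP, e₀, hh, hle⟩ := hT.2 g hgI hgP e he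
  set s := e - e₀
  have hsP : s ∈ posRegion ψ := by
    rw [mem_posRegion, map_sub, sub_nonneg]
    exact hle
  set X := starProd θ (single s 1) h
  have hXI : X ∈ I := hI s (hPS hsP) h (hT.1 hhT)
  have hXJ : X ∈ J := hJ s (hPS hsP) h (hTJ hhT)
  have hXP : X ∈ supported ℂ ℂ (posRegion ψ : Set (Fin n → ℤ)) :=
    starProd_mem_supported θ _ (single_mem_supported ℂ 1 hsP) hhP
  have hX : IsLeadExp ψ X e := by
    simpa [s] using (isLeadExp_single ψ s one_ne_zero).starProd θ hh
  set r := g - (g e / X e) • X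
  have hgr : g = r + (g e / X e) • X := (sub_add_cancel _ _).symm
  have hrJ : r ∈ J := by
    obtain hr | hr := eq_or_ne r 0
    · exact hr ▸ J.zero_mem
    obtain ⟨e', he'⟩ := exists_isLeadExp hψ hr
    have hrP : r ∈ supported ℂ ℂ (posRegion ψ : Set (Fin n → ℤ)) :=
      sub_mem hgP (Submodule.smul_mem _ _ hXP)
    exact IH e' ⟨he.toLex_lt_of_mem_support_sub hX e' he'.1,
      (mem_supported ℂ r).mp hrP he'.1, heP⟩ (sub_mem hgI (I.smul_mem _ hXI)) hrP hr he'
  rw [hgr]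
  exact J.add_mem hrJ (J.smul_mem _ hXJ)

theorem leftIdeal_fg_of_posRegion (hψ : Function.Injective ψ) (hPS : ↑(posRegion ψ) ⊆ S)
    (hunits : ∀ F : Finset (Fin n → ℤ), ↑F ⊆ S →
      ∃ w ∈ S, -w ∈ S ∧ ∀ p ∈ F, w + p ∈ posRegion ψ)
    (hIS : I ≤ supported ℂ ℂ S) (hI : ∀ s ∈ S, ∀ x ∈ I, starProd θ (single s 1) x ∈ I) :
    ∃ T : Finset ((Fin n → ℤ) →₀ ℂ), (T : Set ((Fin n → ℤ) →₀ ℂ)) ⊆ I ∧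
      ∀ J : Submodule ℂ ((Fin n → ℤ) →₀ ℂ),
        (∀ s ∈ S, ∀ x ∈ J, starProd θ (single s 1) x ∈ J) →
        (T : Set ((Fin n → ℤ) →₀ ℂ)) ⊆ J → I ≤ J := by
  obtain ⟨T, hT⟩ := exists_isGroebnerBasis ψ I
  refine ⟨T, hT.1, fun J hJ hTJ g hgI => ?_⟩
  obtain ⟨w, hwS, hnwS, hw⟩ := hunits g.support ((mem_supported ℂ g).mp (hIS hgI))
  have hwg : starProd θ (single w 1) g ∈ J := by
    refine hT.mem_of_mem_supported θ hψ hPS hI hJ hTJ (hI w hwS g hgI) ?_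
    refine (mem_supported ℂ _).mpr fun x hx => ?_
    obtain ⟨p, hp, q, hq, rfl⟩ := Finset.mem_add.mp (support_starProd_subset θ _ _ hx)
    rw [Finset.mem_singleton.mp (support_single_subset hp)]
    exact hw q hq
  have := J.smul_mem (thetaCocycle θ (-w) w)⁻¹ (hJ (-w) hnwS _ hwg)
  rwa [starProd_single_neg_starProd_single, inv_smul_smul₀ (thetaCocycle_ne_zero θ _ _)] at this

end Noetherian

theorem forall_mem_cone_nonneg_iff {n s : ℕ} (g : Fin s → Fin n → ℝ) (a : Fin n → ℝ) :
    (∀ u ∈ {x | ∃ c : Fin s → ℝ, (∀ k, 0 ≤ c k) ∧ x = ∑ k, c k • g k}, 0 ≤ a ⬝ᵥ u) ↔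
      ∀ k, 0 ≤ a ⬝ᵥ g k := by
  refine ⟨fun h k => h (g k) ⟨Pi.single k 1, fun j => ?_, ?_⟩, ?_⟩
  · by_cases hj : j = k <;> simp [hj]
  · simp [Pi.single_apply]
  · rintro h _ ⟨c, hc, rfl⟩
    rw [dotProduct_sum]
    exact Finset.sum_nonneg fun k _ => by
      rw [dotProduct_smul, smul_eq_mul]
      exact mul_nonneg (hc k) (h k)

theorem coneAlg_eq_supported {n s : ℕ} {v : Fin s → Fin n → ℤ} {σ : Set (Fin n → ℝ)}
    (hσ : σ = {x | ∃ c : Fin s → ℝ, (∀ k, 0 ≤ c k) ∧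
      x = ∑ k, c k • (fun i => (v k i : ℝ))}) :
    coneAlg σ =
      supported ℂ ℂ (posRegion (Matrix.of v).mulVecLin.toAddMonoidHom : Set (Fin n → ℤ)) := by
  rw [coneAlg, supported_eq_span_single]
  congr 1
  ext x
  have hdual : ∀ p : Fin n → ℤ, (∀ u ∈ σ, 0 ≤ ∑ i, (p i : ℝ) * u i) ↔
      p ∈ posRegion (Matrix.of v).mulVecLin.toAddMonoidHom := by
    intro p
    rw [hσ]
    refine (forall_mem_cone_nonneg_iff (fun k i => (v k i : ℝ)) (fun i => (p i : ℝ))).trans ?_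
    simp only [mem_posRegion, Pi.le_def, Pi.zero_apply, dotProduct, mul_comm (p _ : ℝ)]
    norm_cast
  simp [hdual, eq_comm]

theorem leftIdeal_fg_of_linearMap {n s : ℕ} (θ : Matrix (Fin n) (Fin n) ℂ)
    (A : (Fin n → ℤ) →ₗ[ℤ] (Fin s → ℤ)) {I : Submodule ℂ ((Fin n → ℤ) →₀ ℂ)}
    (hIS : I ≤ supported ℂ ℂ (posRegion A.toAddMonoidHom : Set (Fin n → ℤ)))
    (hI : ∀ p ∈ posRegion A.toAddMonoidHom, ∀ x ∈ I, starProd θ (single p 1) x ∈ I) :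
    ∃ T : Finset ((Fin n → ℤ) →₀ ℂ), (T : Set ((Fin n → ℤ) →₀ ℂ)) ⊆ I ∧
      ∀ J : Submodule ℂ ((Fin n → ℤ) →₀ ℂ),
        (∀ p ∈ posRegion A.toAddMonoidHom, ∀ x ∈ J, starProd θ (single p 1) x ∈ J) →
        (T : Set ((Fin n → ℤ) →₀ ℂ)) ⊆ J → I ≤ J := by
  obtain ⟨m, φ, hφinj, hφsurj⟩ := A.exists_bijective_domRestrict_ker
  set ψ := A.toAddMonoidHom.append φ.toAddMonoidHom
  have hψ : Function.Injective ψ := by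
    refine (injective_iff_map_eq_zero ψ).mpr fun p hp => ?_
    obtain ⟨hAp, hφp⟩ := (AddMonoidHom.append_eq_zero_iff _ _ p).mp hp
    exact congrArg Subtype.val (hφinj (a₁ := ⟨p, hAp⟩) (a₂ := 0) (by simpa using hφp))
  refine leftIdeal_fg_of_posRegion θ hψ
    (fun p hp => ((AddMonoidHom.nonneg_append_iff _ _ p).mp hp).1) (fun F hF => ?_) hIS hI
  obtain ⟨⟨w, hw⟩, hφw⟩ := hφsurj (∑ p ∈ F, |φ p|)
  replace hw : A w = 0 := hw
  replace hφw : φ w = ∑ p ∈ F, |φ p| := hφw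
  refine ⟨w, by simp [mem_posRegion, hw], by simp [mem_posRegion, hw], fun p hp => ?_⟩
  rw [mem_posRegion, AddMonoidHom.nonneg_append_iff]
  refine ⟨by simpa [hw] using (mem_posRegion _).mp (hF hp), ?_⟩
  calc (0 : Fin m → ℤ) ≤ φ p + |φ p| := fun t => by simpa using add_abs_nonneg (φ p t)
    _ ≤ φ (w + p) := by
      rw [map_add, hφw, add_comm]
      gcongr
      exact Finset.single_le_sum (fun q _ => abs_nonneg (φ q)) hp

theorem coneAlg_noetherian_domain_general {n s : ℕ} (θ : Matrix (Fin n) (Fin n) ℂ)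
    (v : Fin s → Fin n → ℤ) (σ : Set (Fin n → ℝ))
    (hσ : σ = {x | ∃ c : Fin s → ℝ, (∀ k, 0 ≤ c k) ∧
      x = ∑ k, c k • (fun i => (v k i : ℝ))}) :
    -- ℂ_θ[σ] is a subalgebra of the quantum Laurent algebra
    (∀ f ∈ coneAlg σ, ∀ g ∈ coneAlg σ, starProd θ f g ∈ coneAlg σ) ∧
    -- domain: no zero divisors
    (∀ f ∈ coneAlg σ, ∀ g ∈ coneAlg σ, starProd θ f g = 0 → f = 0 ∨ g = 0) ∧
    -- noetherian: every two-sided ⋆_θ-ideal I of ℂ_θ[σ] is finitely generated,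
    -- i.e. I is the smallest two-sided ideal containing some finite subset T
    (∀ I : Submodule ℂ ((Fin n → ℤ) →₀ ℂ), I ≤ coneAlg σ →
      (∀ f ∈ coneAlg σ, ∀ x ∈ I, starProd θ f x ∈ I ∧ starProd θ x f ∈ I) →
      ∃ T : Finset ((Fin n → ℤ) →₀ ℂ), ↑T ⊆ (I : Set ((Fin n → ℤ) →₀ ℂ)) ∧
        ∀ J : Submodule ℂ ((Fin n → ℤ) →₀ ℂ), J ≤ coneAlg σ →
          (∀ f ∈ coneAlg σ, ∀ x ∈ J, starProd θ f x ∈ J ∧ starProd θ x f ∈ J) →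
          ↑T ⊆ (J : Set ((Fin n → ℤ) →₀ ℂ)) → I ≤ J) := by
  rw [coneAlg_eq_supported hσ]
  refine ⟨fun f hf g hg => starProd_mem_supported θ _ hf hg,
    fun f _ g _ => (starProd_eq_zero_iff θ).mp, fun I hIS hI => ?_⟩
  obtain ⟨T, hTI, hT⟩ := leftIdeal_fg_of_linearMap θ _ hIS
    fun p hp x hx => (hI _ (single_mem_supported ℂ 1 hp) x hx).1
  exact ⟨T, hTI, fun J _ hJ => hT J fun p hp x hx => (hJ _ (single_mem_supported ℂ 1 hp) x hx).1⟩

/-- for any strongly convex rational polyhedral cone `σ ⊂ ℝⁿ`, the twisted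
semigroup algebra `ℂ_θ[σ]` is a noetherian domain: it is closed under `⋆_θ`, has no zero
divisors, and every two-sided `⋆_θ`-ideal of it is finitely generated. -/
theorem coneAlg_noetherian_domain {n s : ℕ} (θ : Matrix (Fin n) (Fin n) ℂ)
    (hθ : ∀ i j, θ j i = -θ i j)
    (v : Fin s → Fin n → ℤ) (σ : Set (Fin n → ℝ))
    (hσ : σ = {x | ∃ c : Fin s → ℝ, (∀ k, 0 ≤ c k) ∧
      x = ∑ k, c k • (fun i => (v k i : ℝ))})
    (hconv : ∀ x ∈ σ, -x ∈ σ → x = 0) :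
    -- ℂ_θ[σ] is a subalgebra of the quantum Laurent algebra
    (∀ f ∈ coneAlg σ, ∀ g ∈ coneAlg σ, starProd θ f g ∈ coneAlg σ) ∧
    -- domain: no zero divisors
    (∀ f ∈ coneAlg σ, ∀ g ∈ coneAlg σ, starProd θ f g = 0 → f = 0 ∨ g = 0) ∧
    -- noetherian: every two-sided ⋆_θ-ideal I of ℂ_θ[σ] is finitely generated,
    -- i.e. I is the smallest two-sided ideal containing some finite subset T
    (∀ I : Submodule ℂ ((Fin n → ℤ) →₀ ℂ), I ≤ coneAlg σ →
      (∀ f ∈ coneAlg σ, ∀ x ∈ I, starProd θ f x ∈ I ∧ starProd θ x f ∈ I) →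
      ∃ T : Finset ((Fin n → ℤ) →₀ ℂ), ↑T ⊆ (I : Set ((Fin n → ℤ) →₀ ℂ)) ∧
        ∀ J : Submodule ℂ ((Fin n → ℤ) →₀ ℂ), J ≤ coneAlg σ →
          (∀ f ∈ coneAlg σ, ∀ x ∈ J, starProd θ f x ∈ J ∧ starProd θ x f ∈ J) →
          ↑T ⊆ (J : Set ((Fin n → ℤ) →₀ ℂ)) → I ≤ J) :=
  coneAlg_noetherian_domain_general θ v σ hσ
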